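/- arXiv:1105.2414 — 3 statements merged into one kernel-verified Lean document; each statement's English description precedes it below -/
import Mathlib

section
/- For every K with 0 < K < 2, the cubic equation (2-K)^3 m^3 - 4(2-K) m^2 - 4(2-K) m + 8 = 0 has exactly one root m in the open interval (0, 2/(2-K)). -/
/-!
With `c = 2 - K ∈ (0, 2)`, the cubic is `8` at `m = 0` and `8 - 16 / c < 0` at `m = 2 / c`, so a root
exists by the intermediate value theorem. For uniqueness substitute `x = c m ∈ (0, 2)`: a root
satisfies `c (x³ - 4x + 8) = 4x²`. Eliminating `c` between two such roots `x, y` leaves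
`(y - x)(x²y² + 4xy - 8(x + y)) = 0`, and the second factor is negative on `(0, 2)²`.
-/

open Set

def equilibriumCubic (c m : ℝ) : ℝ :=
  c ^ 3 * m ^ 3 - 4 * c * m ^ 2 - 4 * c * m + 8

theorem equilibriumCubic_two_div {c : ℝ} (hc : c ≠ 0) :
    equilibriumCubic c (2 / c) = 8 - 16 / c := by
  unfold equilibriumCubic
  field_simp
  ring

theorem exists_equilibriumCubic_eq_zero {c : ℝ} (hc0 : 0 < c) (hc2 : c < 2) :
    ∃ m ∈ Ioo 0 (2 / c), equilibriumCubic c m = 0 := by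
  have hcont : ContinuousOn (equilibriumCubic c) (Icc 0 (2 / c)) := by
    unfold equilibriumCubic; fun_prop
  have hneg : equilibriumCubic c (2 / c) < 0 := by
    rw [equilibriumCubic_two_div hc0.ne', sub_neg, lt_div_iff₀ hc0]
    linarith
  have hpos : 0 < equilibriumCubic c 0 := by norm_num [equilibriumCubic]
  exact intermediate_value_Ioo' (by positivity) hcont ⟨hneg, hpos⟩

theorem mul_cubic_eq_sq_of_equilibriumCubic_eq_zero {c m : ℝ} (h : equilibriumCubic c m = 0) :
    c * ((c * m) ^ 3 - 4 * (c * m) + 8) = 4 * (c * m) ^ 2 := by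
  unfold equilibriumCubic at h
  linear_combination c * h

theorem sq_mul_sq_add_sub_neg {x y : ℝ} (hx0 : 0 < x) (hx2 : x < 2) (hy0 : 0 < y) (hy2 : y < 2) :
    x ^ 2 * y ^ 2 + 4 * (x * y) - 8 * (x + y) < 0 := by
  nlinarith [mul_pos hx0 hy0, mul_pos (mul_pos hx0 hy0) hy0, mul_pos (sub_pos.2 hx2) hy0,
    mul_pos (mul_pos (sub_pos.2 hx2) hy0) hy0]

theorem eq_of_mul_cubic_eq_sq {c x y : ℝ} (hx0 : 0 < x) (hx2 : x < 2) (hy0 : 0 < y) (hy2 : y < 2)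
    (hx : c * (x ^ 3 - 4 * x + 8) = 4 * x ^ 2) (hy : c * (y ^ 3 - 4 * y + 8) = 4 * y ^ 2) :
    x = y := by
  have hfactor : (y - x) * (x ^ 2 * y ^ 2 + 4 * (x * y) - 8 * (x + y)) = 0 := by
    linear_combination ((x ^ 3 - 4 * x + 8) * hy - (y ^ 3 - 4 * y + 8) * hx) / 4
  have hQ := (sq_mul_sq_add_sub_neg hx0 hx2 hy0 hy2).ne
  exact (sub_eq_zero.1 ((mul_eq_zero.1 hfactor).resolve_right hQ)).symm

theorem eq_of_equilibriumCubic_eq_zero {c m n : ℝ} (hc : 0 < c)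
    (hm : m ∈ Ioo 0 (2 / c)) (hn : n ∈ Ioo 0 (2 / c))
    (hfm : equilibriumCubic c m = 0) (hfn : equilibriumCubic c n = 0) : m = n := by
  refine mul_left_cancel₀ hc.ne' (eq_of_mul_cubic_eq_sq (mul_pos hc hm.1) ?_ (mul_pos hc hn.1) ?_
    (mul_cubic_eq_sq_of_equilibriumCubic_eq_zero hfm)
    (mul_cubic_eq_sq_of_equilibriumCubic_eq_zero hfn))
  · exact (lt_div_iff₀' hc).1 hm.2
  · exact (lt_div_iff₀' hc).1 hn.2

theorem unique_root_of_cubic (K : ℝ) (hK0 : 0 < K) (hK2 : K < 2) :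
    ∃! m : ℝ, (0 < m ∧ m < 2 / (2 - K)) ∧
      (2 - K) ^ 3 * m ^ 3 - 4 * (2 - K) * m ^ 2 - 4 * (2 - K) * m + 8 = 0 := by
  have hc0 : 0 < 2 - K := by linarith
  obtain ⟨m, hm, hfm⟩ := exists_equilibriumCubic_eq_zero hc0 (by linarith)
  exact ⟨m, ⟨hm, hfm⟩, fun n ⟨hn, hfn⟩ =>
    eq_of_equilibriumCubic_eq_zero hc0 hn hm hfn hfm⟩
end

section
/- If λ satisfies λ = ((K/(2λ))·Σ) / ((K²/(4λ²))·Σ + σ²) with λ > 0, Σ > 0, σ > 0 and 0 < K < 2, then λ = √(K(2-K)Σ)/(2σ). -/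
theorem eq_sqrt_div_of_sq_mul_sq_eq {x c y : ℝ} (hx : 0 ≤ x) (hc : 0 < c)
    (h : x ^ 2 * c ^ 2 = y) : x = Real.sqrt y / c := by
  rw [eq_div_iff hc.ne', ← h, ← mul_pow, Real.sqrt_sq (by positivity)]

theorem sq_mul_sq_eq_of_eq_div_quadratic {K S σ lam : ℝ} (hlam : lam ≠ 0)
    (heq : lam = (K / (2 * lam) * S) / (K ^ 2 / (4 * lam ^ 2) * S + σ ^ 2)) :
    lam ^ 2 * (2 * σ) ^ 2 = K * (2 - K) * S := by
  -- A zero denominator would give `lam = 0` through `x / 0 = 0`.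
  have hden : K ^ 2 / (4 * lam ^ 2) * S + σ ^ 2 ≠ 0 := by
    rintro h
    rw [h, div_zero] at heq
    exact hlam heq
  rw [eq_div_iff hden] at heq
  field_simp at heq
  linear_combination heq / 2

theorem lambda_last_period_general (K S σ lam : ℝ)
    (hσ : 0 < σ) (hlam : 0 < lam)
    (heq : lam = (K / (2 * lam) * S) / (K ^ 2 / (4 * lam ^ 2) * S + σ ^ 2)) :
    lam = Real.sqrt (K * (2 - K) * S) / (2 * σ) :=
  eq_sqrt_div_of_sq_mul_sq_eq hlam.le (by positivity)
    (sq_mul_sq_eq_of_eq_div_quadratic hlam.ne' heq)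

theorem lambda_last_period (K S σ lam : ℝ) (hK0 : 0 < K) (hK2 : K < 2)
    (hS : 0 < S) (hσ : 0 < σ) (hlam : 0 < lam)
    (heq : lam = (K / (2 * lam) * S) / (K ^ 2 / (4 * lam ^ 2) * S + σ ^ 2)) :
    lam = Real.sqrt (K * (2 - K) * S) / (2 * σ) :=
  lambda_last_period_general K S σ lam hσ hlam heq
end

section
/- Define E(π₁) = (K²/√(2K(2-K)))·σ_μ√Σ₀ + ((6K² - 10K + 4)/√(2K(2-K)))·(σ_μ/√Σ₀)·p₀². Then for 2/3 < K < 1 and p₀ = 0, E(π₁) < σ_μ√Σ₀/√2; and for 1 < K < 2 and p₀ = 0, E(π₁) > σ_μ√Σ₀/√2. -/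
theorem total_profit_comparison (K S0 σ : ℝ) (hS : 0 < S0) (hσ : 0 < σ) :
    (2 / 3 < K → K < 1 →
      K ^ 2 / Real.sqrt (2 * K * (2 - K)) * (σ * Real.sqrt S0)
        < σ * Real.sqrt S0 / Real.sqrt 2) ∧
    (1 < K → K < 2 →
      K ^ 2 / Real.sqrt (2 * K * (2 - K)) * (σ * Real.sqrt S0)
        > σ * Real.sqrt S0 / Real.sqrt 2) := by
  have hA : 0 < σ * Real.sqrt S0 := by positivity
  have h2 : (0:ℝ) < Real.sqrt 2 := by positivity
  constructor
  · intro h1 h2'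
    have hK : 0 < K := by linarith
    have hc : (0:ℝ) < 2 * K * (2 - K) := by nlinarith
    have hsc : 0 < Real.sqrt (2 * K * (2 - K)) := Real.sqrt_pos.mpr hc
    have key : K ^ 2 / Real.sqrt (2 * K * (2 - K)) < 1 / Real.sqrt 2 := by
      rw [div_lt_div_iff₀ hsc h2, one_mul]
      have : K ^ 2 * Real.sqrt 2 < Real.sqrt (2 * K * (2 - K)) := by
        rw [show K ^ 2 * Real.sqrt 2 = Real.sqrt ((K^2)^2 * 2) by
          rw [Real.sqrt_mul (by positivity), Real.sqrt_sq (by positivity)]]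
        apply Real.sqrt_lt_sqrt (by positivity)
        have h3 : K ^ 3 < 1 := by nlinarith [sq_nonneg K, mul_pos hK hK]
        nlinarith [mul_lt_mul_of_pos_left (show K^3 < 2 - K by linarith) (by linarith : (0:ℝ) < 2*K)]
      exact this
    calc K ^ 2 / Real.sqrt (2 * K * (2 - K)) * (σ * Real.sqrt S0)
        < 1 / Real.sqrt 2 * (σ * Real.sqrt S0) := by
          exact mul_lt_mul_of_pos_right key hA
      _ = σ * Real.sqrt S0 / Real.sqrt 2 := by ring
  · intro h1 h2'
    have hK : 0 < K := by linarith
    have hc : (0:ℝ) < 2 * K * (2 - K) := by nlinarith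
    have hsc : 0 < Real.sqrt (2 * K * (2 - K)) := Real.sqrt_pos.mpr hc
    have key : 1 / Real.sqrt 2 < K ^ 2 / Real.sqrt (2 * K * (2 - K)) := by
      rw [div_lt_div_iff₀ h2 hsc, one_mul]
      have : Real.sqrt (2 * K * (2 - K)) < K ^ 2 * Real.sqrt 2 := by
        rw [show K ^ 2 * Real.sqrt 2 = Real.sqrt ((K^2)^2 * 2) by
          rw [Real.sqrt_mul (by positivity), Real.sqrt_sq (by positivity)]]
        apply Real.sqrt_lt_sqrt (le_of_lt hc)
        have h3 : 1 < K ^ 3 := by nlinarith [sq_nonneg (K-1), mul_pos hK hK]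
        nlinarith [mul_lt_mul_of_pos_left (show 2 - K < K^3 by linarith) (by linarith : (0:ℝ) < 2*K)]
      linarith
    calc σ * Real.sqrt S0 / Real.sqrt 2
        = 1 / Real.sqrt 2 * (σ * Real.sqrt S0) := by ring
      _ < K ^ 2 / Real.sqrt (2 * K * (2 - K)) * (σ * Real.sqrt S0) :=
          mul_lt_mul_of_pos_right key hA
end
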